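/- arXiv:math/0004092 — 2 statements merged into one kernel-verified Lean document; each statement's English description precedes it below -/
import Mathlib

section
/- Let q be a primitive l-th root of unity with l odd. Then in A(SL_q(2)) one has a^l d^l - b^l c^l = 1, i.e. the l-th powers α, β, γ, δ satisfy the classical determinant relation αδ - βγ = 1. -/
/-!
Put `t = bc`. The relations give `ad = 1 + q t` and `t d = q² d t`, so moving the `d`'s past `t`
one at a time yields `a^k d^k = ∏_{j<k} (1 + q^{2j+1} t)`, a polynomial in the single element `t`.
For `l` odd, `j ↦ q^{2j+1} = q (q²)^j` enumerates the `l`-th roots of unity (as `q²` is again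
primitive), and `∏_ζ (1 + ζ y) = 1 + y^l`. Hence `a^l d^l = 1 + t^l = 1 + b^l c^l`, since `b`
and `c` commute.
-/

noncomputable section
open scoped TensorProduct

/-- The free `ℂ`-algebra on four generators `a, b, c, d`. -/
abbrev FreeSL : Type := FreeAlgebra ℂ (Fin 4)

def Fa : FreeSL := FreeAlgebra.ι ℂ 0
def Fb : FreeSL := FreeAlgebra.ι ℂ 1
def Fc : FreeSL := FreeAlgebra.ι ℂ 2
def Fd : FreeSL := FreeAlgebra.ι ℂ 3

/-- The defining relations of `A(SL_q(2))`. -/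
inductive SLqRel (q : ℂ) : FreeSL → FreeSL → Prop
  | ab : SLqRel q (Fa * Fb) (q • (Fb * Fa))
  | ac : SLqRel q (Fa * Fc) (q • (Fc * Fa))
  | bd : SLqRel q (Fb * Fd) (q • (Fd * Fb))
  | bc : SLqRel q (Fb * Fc) (Fc * Fb)
  | cd : SLqRel q (Fc * Fd) (q • (Fd * Fc))
  | ad : SLqRel q (Fa * Fd - Fd * Fa) ((q - q⁻¹) • (Fb * Fc))
  | det : SLqRel q (Fa * Fd - q • (Fb * Fc)) 1

/-- The quantum coordinate algebra `A(SL_q(2))`. -/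
abbrev ASLq (q : ℂ) : Type := RingQuot (SLqRel q)

def aq (q : ℂ) : ASLq q := RingQuot.mkAlgHom ℂ (SLqRel q) Fa
def bq (q : ℂ) : ASLq q := RingQuot.mkAlgHom ℂ (SLqRel q) Fb
def cq (q : ℂ) : ASLq q := RingQuot.mkAlgHom ℂ (SLqRel q) Fc
def dq (q : ℂ) : ASLq q := RingQuot.mkAlgHom ℂ (SLqRel q) Fd

/-- The coefficients `p_{k,j}(q)`. -/
def pcoef (q : ℂ) (k j : ℕ) : ℂ :=
  q ^ (j ^ 2) * (∏ r ∈ Finset.Icc (j + 1) k, (q ^ (2 * r) - 1)) /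
    (∏ s ∈ Finset.Icc 1 (k - j), (q ^ (2 * s) - 1))

open Polynomial Finset

theorem IsPrimitiveRoot.prod_nthRootsFinset_one_eq_prod_range {R M : Type*} [CommRing R]
    [IsDomain R] [CommMonoid M] {ζ α : R} {n : ℕ} (hζ : IsPrimitiveRoot ζ n) (hα : α ^ n = 1)
    (f : R → M) :
    ∏ x ∈ nthRootsFinset n (1 : R), f x = ∏ j ∈ range n, f (ζ ^ j * α) := by
  classical
  rw [nthRootsFinset_def, Finset.prod_eq_multiset_prod, Multiset.toFinset_val,
    Multiset.dedup_eq_self.mpr hζ.nthRoots_one_nodup, hζ.nthRoots_eq hα, Multiset.map_map,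
    Finset.prod_eq_multiset_prod, Finset.range_val]
  rfl

theorem IsPrimitiveRoot.prod_range_one_add_pow_two_mul_add_one_mul {R : Type*} [CommRing R]
    [IsDomain R] {q : R} {l : ℕ} (hq : IsPrimitiveRoot q l) (hl : Odd l) (y : R) :
    ∏ j ∈ range l, (1 + q ^ (2 * j + 1) * y) = 1 + y ^ l := by
  have hq2 : IsPrimitiveRoot (q ^ 2) l := hq.pow_of_coprime 2 (Nat.coprime_two_left.mpr hl)
  calc ∏ j ∈ range l, (1 + q ^ (2 * j + 1) * y)
      = ∏ j ∈ range l, (1 + (q ^ 2) ^ j * q * y) := by simp only [← pow_mul, ← pow_succ]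
    _ = 1 ^ l + y ^ l := by
      rw [← hq2.prod_nthRootsFinset_one_eq_prod_range hq.pow_eq_one (fun x ↦ 1 + x * y)]
      exact (hq.pow_add_pow_eq_prod_add_mul 1 y hl).symm
    _ = 1 + y ^ l := by rw [one_pow]

section QuasiCommuting

variable {R A : Type*} [CommSemiring R] [Semiring A] [Algebra R A]

theorem mul_pow_eq_smul_pow_mul_of_mul_eq_smul {t d : A} {r : R} (h : t * d = r • (d * t))
    (k : ℕ) : t * d ^ k = r ^ k • (d ^ k * t) := by
  induction k with
  | zero => simp
  | succ k ih =>
    calc t * d ^ (k + 1) = (t * d ^ k) * d := by rw [pow_succ, mul_assoc]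
      _ = r ^ k • (d ^ k * (t * d)) := by rw [ih, smul_mul_assoc, mul_assoc]
      _ = r ^ (k + 1) • (d ^ (k + 1) * t) := by
        rw [h, mul_smul_comm, smul_smul, ← pow_succ, ← mul_assoc, ← pow_succ]

theorem pow_mul_pow_eq_aeval_prod {a d t : A} {q : R} (had : a * d = 1 + q • t)
    (htd : t * d = q ^ 2 • (d * t)) (k : ℕ) :
    a ^ k * d ^ k = aeval t (∏ j ∈ range k, (1 + C q ^ (2 * j + 1) * X)) := by
  induction k with
  | zero => simp
  | succ k ih =>
    calc a ^ (k + 1) * d ^ (k + 1) = a ^ k * ((a * d) * d ^ k) := by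
          rw [pow_succ, pow_succ', mul_assoc, mul_assoc]
      _ = a ^ k * d ^ k + q • (a ^ k * (t * d ^ k)) := by
          rw [had, add_mul, one_mul, smul_mul_assoc, mul_add, mul_smul_comm]
      _ = a ^ k * d ^ k * (1 + q ^ (2 * k + 1) • t) := by
          rw [mul_pow_eq_smul_pow_mul_of_mul_eq_smul htd, mul_smul_comm, smul_smul, ← pow_mul,
            ← pow_succ', mul_add, mul_one, mul_smul_comm, mul_assoc]
      _ = aeval t (∏ j ∈ range (k + 1), (1 + C q ^ (2 * j + 1) * X)) := by
          rw [prod_range_succ, map_mul, ← ih, Algebra.smul_def]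
          simp

end QuasiCommuting

section Relations

variable (q : ℂ)

theorem commute_bq_cq : Commute (bq q) (cq q) :=
  show bq q * cq q = cq q * bq q by
    simpa [bq, cq] using RingQuot.mkAlgHom_rel ℂ (SLqRel.bc (q := q))

theorem bq_mul_dq : bq q * dq q = q • (dq q * bq q) := by
  simpa [bq, dq] using RingQuot.mkAlgHom_rel ℂ (SLqRel.bd (q := q))

theorem cq_mul_dq : cq q * dq q = q • (dq q * cq q) := by
  simpa [cq, dq] using RingQuot.mkAlgHom_rel ℂ (SLqRel.cd (q := q))

theorem aq_mul_dq : aq q * dq q = 1 + q • (bq q * cq q) := by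
  refine sub_eq_iff_eq_add.mp ?_
  simpa [aq, bq, cq, dq] using RingQuot.mkAlgHom_rel ℂ (SLqRel.det (q := q))

theorem bq_mul_cq_mul_dq : bq q * cq q * dq q = q ^ 2 • (dq q * (bq q * cq q)) := by
  rw [mul_assoc, cq_mul_dq, mul_smul_comm, ← mul_assoc, bq_mul_dq, smul_mul_assoc, smul_smul,
    mul_assoc, sq]

end Relations

/-- For `q` a primitive `l`-th root of unity, `l` odd,
`a^l d^l - b^l c^l = 1` in `A(SL_q(2))`. -/
theorem stmt5 (q : ℂ) (l : ℕ) (hq : IsPrimitiveRoot q l) (hl : Odd l) :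
    aq q ^ l * dq q ^ l - bq q ^ l * cq q ^ l = 1 := by
  have hCq : IsPrimitiveRoot (C q) l := hq.map_of_injective C_injective
  have hdet : aq q ^ l * dq q ^ l = 1 + (bq q * cq q) ^ l := by
    rw [pow_mul_pow_eq_aeval_prod (aq_mul_dq q) (bq_mul_cq_mul_dq q),
      hCq.prod_range_one_add_pow_two_mul_add_one_mul hl, map_add, map_one, map_pow, aeval_X]
  rw [hdet, (commute_bq_cq q).mul_pow, add_sub_cancel_right]
end
end

section
/- Let q be a primitive l-th root of unity with l odd. In A(SL_q(2)), with δ = d^l central, one has for 0 ≤ k ≤ l: b^r c^s d^{l-k} = q^{(l-k)(r+s)} δ · a^k b^r c^s − Σ_{j=1}^{k} p_{k,j}(q) b^{r+j} c^{s+j} d^{l-k}. -/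
noncomputable section
open scoped TensorProduct

/-!
With `x = b * c` the relations give `a * x = q ^ 2 • (x * a)` and `a * d = 1 + q • x`, so
pushing one more `a` through `b ^ j * c ^ j * d` yields a two-term recursion for the coefficients of
`a ^ k * d ^ k = ∑ j, adCoeff q k j • (b ^ j * c ^ j)`. After clearing denominators it is the
recursion satisfied by `p_{k,j}(q)`, whose denominators `∏ (q ^ (2s) - 1)`, `s < l`, do not vanish
since `l` is odd.

Commuting `a` past `d ^ (n + 1)` costs a multiple of `q ^ (2n+1) - q⁻¹`, and `b`, `c` pick up
`q ^ n`, so `δ = d ^ l` is central once `q ^ l = 1`. Then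
`δ a^k b^r c^s = a^k b^r c^s d^k d^(l-k) = q^(k(r+s)) (a^k d^k) b^r c^s d^(l-k)`,
and the total scalar `q ^ (l(r+s))` is `1`.
-/

open Finset

/-- The coefficient of `b ^ j * c ^ j` in `a ^ k * d ^ k`; the recursion is the one forced by
`ASLq.aq_mul_bq_pow_mul_cq_pow_mul_dq`. -/
def adCoeff (q : ℂ) : ℕ → ℕ → ℂ
  | _, 0 => 1
  | 0, _ + 1 => 0
  | k + 1, j + 1 => adCoeff q k (j + 1) * q ^ (2 * (j + 1)) + adCoeff q k j * q ^ (2 * j + 1)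

namespace adCoeff

variable (q : ℂ)

@[simp]
theorem zero_right (k : ℕ) : adCoeff q k 0 = 1 := by
  cases k <;> rfl

theorem succ_succ (k j : ℕ) :
    adCoeff q (k + 1) (j + 1) =
      adCoeff q k (j + 1) * q ^ (2 * (j + 1)) + adCoeff q k j * q ^ (2 * j + 1) :=
  rfl

theorem eq_zero_of_lt {k j : ℕ} (h : k < j) : adCoeff q k j = 0 := by
  induction k generalizing j with
  | zero => obtain ⟨j, rfl⟩ := Nat.exists_eq_add_one_of_ne_zero (by omega : j ≠ 0); rfl
  | succ k ih =>
    obtain ⟨j, rfl⟩ := Nat.exists_eq_add_one_of_ne_zero (by omega : j ≠ 0)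
    rw [succ_succ, ih (by omega), ih (by omega), zero_mul, zero_mul, add_zero]

theorem sum_succ_smul {M : Type*} [AddCommMonoid M] [Module ℂ M] (X : ℕ → M) (k : ℕ) :
    ∑ j ∈ range (k + 2), adCoeff q (k + 1) j • X j =
      ∑ j ∈ range (k + 1), (adCoeff q k j * q ^ (2 * j)) • X j +
        ∑ j ∈ range (k + 1), (adCoeff q k j * q ^ (2 * j + 1)) • X (j + 1) := by
  rw [sum_range_succ', sum_range_succ' (fun j => (adCoeff q k j * q ^ (2 * j)) • X j)]
  simp only [succ_succ, add_smul, sum_add_distrib]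
  rw [sum_range_succ (fun j => (adCoeff q k (j + 1) * q ^ (2 * (j + 1))) • X (j + 1)),
    eq_zero_of_lt q (Nat.lt_succ_self k)]
  simp only [zero_mul, zero_smul, add_zero, zero_right, mul_zero, pow_zero, mul_one]
  abel

theorem mul_prod_pow_two_mul_sub_one {k j : ℕ} (h : j ≤ k) :
    adCoeff q k j * ∏ s ∈ Icc 1 (k - j), (q ^ (2 * s) - 1) =
      q ^ (j ^ 2) * ∏ r ∈ Icc (j + 1) k, (q ^ (2 * r) - 1) := by
  induction k generalizing j with
  | zero =>
    obtain rfl : j = 0 := by omega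
    simp
  | succ k ih =>
    rcases j with _ | j
    · simp
    rcases Nat.lt_or_ge j k with hlt | hge
    · obtain ⟨m, rfl⟩ : ∃ m, k = j + 1 + m := ⟨k - (j + 1), by omega⟩
      have ih₁ := ih (j := j + 1) (by omega)
      have ih₀ := ih (j := j) (by omega)
      have hD : ∏ s ∈ Icc 1 (m + 1), (q ^ (2 * s) - 1) =
          (∏ s ∈ Icc 1 m, (q ^ (2 * s) - 1)) * (q ^ (2 * (m + 1)) - 1) :=
        prod_Icc_succ_top (by omega) _
      have hN : ∏ r ∈ Icc (j + 1) (j + 1 + m), (q ^ (2 * r) - 1) =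
          (q ^ (2 * (j + 1)) - 1) * ∏ r ∈ Icc (j + 1 + 1) (j + 1 + m), (q ^ (2 * r) - 1) := by
        rw [← mul_prod_Ioc_eq_prod_Icc (by omega), Icc_add_one_left_eq_Ioc]
      have hN' : ∏ r ∈ Icc (j + 1 + 1) (j + 1 + m + 1), (q ^ (2 * r) - 1) =
          (∏ r ∈ Icc (j + 1 + 1) (j + 1 + m), (q ^ (2 * r) - 1)) *
            (q ^ (2 * (j + 1 + m + 1)) - 1) :=
        prod_Icc_succ_top (by omega) _
      rw [show j + 1 + m - (j + 1) = m by omega] at ih₁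
      rw [show j + 1 + m - j = m + 1 by omega, hD, hN] at ih₀
      rw [show j + 1 + m + 1 - (j + 1) = m + 1 by omega, hD, hN', succ_succ]
      linear_combination
        (q ^ (2 * (j + 1)) * (q ^ (2 * (m + 1)) - 1)) * ih₁ + q ^ (2 * j + 1) * ih₀
    · obtain rfl : j = k := by omega
      have hdiag := ih (j := j) le_rfl
      simp only [tsub_self, Order.lt_one_iff, Icc_eq_empty_of_lt, prod_empty, mul_one,
        lt_add_iff_pos_right] at hdiag ⊢
      rw [succ_succ, eq_zero_of_lt q (Nat.lt_succ_self j), hdiag]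
      ring

theorem eq_pcoef {k j : ℕ} (h : j ≤ k) (hD : ∏ s ∈ Icc 1 (k - j), (q ^ (2 * s) - 1) ≠ 0) :
    adCoeff q k j = pcoef q k j := by
  rw [pcoef, eq_div_iff hD, mul_prod_pow_two_mul_sub_one q h]

end adCoeff

theorem IsPrimitiveRoot.prod_Icc_pow_two_mul_sub_one_ne_zero {K : Type*} [CommRing K]
    [IsDomain K] {ζ : K} {l m : ℕ} (hζ : IsPrimitiveRoot ζ l) (hl : Odd l) (hm : m < l) :
    ∏ s ∈ Icc 1 m, (ζ ^ (2 * s) - 1) ≠ 0 := by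
  refine prod_ne_zero_iff.mpr fun s hs hs0 => ?_
  rw [mem_Icc] at hs
  have h2s : l ∣ 2 * s := (hζ.pow_eq_one_iff_dvd _).mp (sub_eq_zero.mp hs0)
  have hls : l ≤ s :=
    Nat.le_of_dvd (by omega) ((Nat.coprime_two_right.mpr hl).dvd_of_dvd_mul_left h2s)
  omega

section QCommute

variable {R A : Type*} [CommSemiring R] [Semiring A] [Algebra R A] {t : R} {x y : A}

theorem mul_pow_eq_smul_pow_mul (h : x * y = t • (y * x)) (n : ℕ) :
    x * y ^ n = t ^ n • (y ^ n * x) := by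
  induction n with
  | zero => simp
  | succ n ih =>
    rw [pow_succ', ← mul_assoc, h, smul_mul_assoc, mul_assoc, ih, mul_smul_comm, smul_smul,
      ← pow_succ', ← mul_assoc, ← pow_succ']

theorem pow_mul_pow_eq_smul_pow_mul_pow (h : x * y = t • (y * x)) (m n : ℕ) :
    x ^ m * y ^ n = t ^ (m * n) • (y ^ n * x ^ m) := by
  induction m with
  | zero => simp
  | succ m ih =>
    rw [pow_succ, mul_assoc, mul_pow_eq_smul_pow_mul h, mul_smul_comm, ← mul_assoc, ih,
      smul_mul_assoc, smul_smul, mul_assoc, ← pow_succ, ← pow_add, add_one_mul, add_comm]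

end QCommute

namespace ASLq

variable (q : ℂ)

theorem aq_mul_bq : aq q * bq q = q • (bq q * aq q) := by
  simpa [aq, bq] using RingQuot.mkAlgHom_rel ℂ (SLqRel.ab (q := q))

theorem aq_mul_cq : aq q * cq q = q • (cq q * aq q) := by
  simpa [aq, cq] using RingQuot.mkAlgHom_rel ℂ (SLqRel.ac (q := q))

theorem bq_mul_dq : bq q * dq q = q • (dq q * bq q) := by
  simpa [bq, dq] using RingQuot.mkAlgHom_rel ℂ (SLqRel.bd (q := q))

theorem commute_bq_cq : Commute (bq q) (cq q) :=
  show bq q * cq q = cq q * bq q by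
    simpa [bq, cq] using RingQuot.mkAlgHom_rel ℂ (SLqRel.bc (q := q))

theorem cq_mul_dq : cq q * dq q = q • (dq q * cq q) := by
  simpa [cq, dq] using RingQuot.mkAlgHom_rel ℂ (SLqRel.cd (q := q))

theorem aq_mul_dq_sub_dq_mul_aq :
    aq q * dq q - dq q * aq q = (q - q⁻¹) • (bq q * cq q) := by
  simpa [aq, bq, cq, dq] using RingQuot.mkAlgHom_rel ℂ (SLqRel.ad (q := q))

theorem aq_mul_dq : aq q * dq q = 1 + q • (bq q * cq q) := by
  have h : aq q * dq q - q • (bq q * cq q) = 1 := by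
    simpa [aq, bq, cq, dq] using RingQuot.mkAlgHom_rel ℂ (SLqRel.det (q := q))
  rw [← h, sub_add_cancel]

theorem bq_pow_mul_cq_pow_mul (i j m n : ℕ) :
    bq q ^ i * cq q ^ j * (bq q ^ m * cq q ^ n) = bq q ^ (i + m) * cq q ^ (j + n) := by
  rw [mul_assoc, ← mul_assoc (cq q ^ j), ← ((commute_bq_cq q).pow_pow m j).eq, mul_assoc,
    ← mul_assoc (bq q ^ i), ← pow_add, ← pow_add]

theorem bq_pow_mul_cq_pow_mul_dq_pow (r s n : ℕ) :
    bq q ^ r * cq q ^ s * dq q ^ n = q ^ (n * (r + s)) • (dq q ^ n * (bq q ^ r * cq q ^ s)) := by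
  rw [mul_assoc, pow_mul_pow_eq_smul_pow_mul_pow (cq_mul_dq q), mul_smul_comm, ← mul_assoc,
    pow_mul_pow_eq_smul_pow_mul_pow (bq_mul_dq q), smul_mul_assoc, smul_smul, mul_assoc,
    ← pow_add, mul_add, mul_comm n, mul_comm n, add_comm]

theorem aq_mul_dq_pow_succ_sub (n : ℕ) :
    aq q * dq q ^ (n + 1) - dq q ^ (n + 1) * aq q =
      (q ^ (2 * n + 1) - q⁻¹) • (dq q ^ n * (bq q * cq q)) := by
  induction n with
  | zero => simpa using aq_mul_dq_sub_dq_mul_aq q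
  | succ n ih =>
    have hsplit : aq q * dq q ^ (n + 2) - dq q ^ (n + 2) * aq q =
        (aq q * dq q ^ (n + 1) - dq q ^ (n + 1) * aq q) * dq q +
          dq q ^ (n + 1) * (aq q * dq q - dq q * aq q) := by
      rw [pow_succ _ (n + 1)]
      simp only [mul_sub, sub_mul, mul_assoc]
      abel
    have hbc : dq q ^ n * (bq q * cq q) * dq q = q ^ 2 • (dq q ^ (n + 1) * (bq q * cq q)) := by
      have hbcd := bq_pow_mul_cq_pow_mul_dq_pow q 1 1 1
      simp only [pow_one, one_mul, one_add_one_eq_two] at hbcd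
      rw [mul_assoc, hbcd, mul_smul_comm, ← mul_assoc, ← pow_succ]
    rw [hsplit, ih, aq_mul_dq_sub_dq_mul_aq, smul_mul_assoc, hbc, mul_smul_comm, smul_smul,
      ← add_smul]
    congr 1
    linear_combination -mul_self_mul_inv q

theorem commute_dq_pow_aq {n : ℕ} (hq : q ^ n = 1) : Commute (dq q ^ n) (aq q) := by
  rcases n with _ | n
  · simp
  have hcoef : q ^ (2 * n + 1) - q⁻¹ = 0 := by
    refine sub_eq_zero.mpr (eq_inv_of_mul_eq_one_left ?_)
    rw [← pow_succ, show 2 * n + 1 + 1 = (n + 1) * 2 by ring, pow_mul, hq, one_pow]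
  have h := aq_mul_dq_pow_succ_sub q n
  rw [hcoef, zero_smul, sub_eq_zero] at h
  exact h.symm

theorem commute_dq_pow_bq {n : ℕ} (hq : q ^ n = 1) : Commute (dq q ^ n) (bq q) := by
  have h := mul_pow_eq_smul_pow_mul (bq_mul_dq q) n
  rw [hq, one_smul] at h
  exact h.symm

theorem commute_dq_pow_cq {n : ℕ} (hq : q ^ n = 1) : Commute (dq q ^ n) (cq q) := by
  have h := mul_pow_eq_smul_pow_mul (cq_mul_dq q) n
  rw [hq, one_smul] at h
  exact h.symm

theorem aq_mul_bq_pow_mul_cq_pow_mul_dq (j : ℕ) :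
    aq q * (bq q ^ j * cq q ^ j * dq q) =
      q ^ (2 * j) • (bq q ^ j * cq q ^ j) +
        q ^ (2 * j + 1) • (bq q ^ (j + 1) * cq q ^ (j + 1)) := by
  have habc : aq q * (bq q ^ j * cq q ^ j) = q ^ (2 * j) • (bq q ^ j * cq q ^ j * aq q) := by
    rw [← mul_assoc, mul_pow_eq_smul_pow_mul (aq_mul_bq q), smul_mul_assoc, mul_assoc,
      mul_pow_eq_smul_pow_mul (aq_mul_cq q), mul_smul_comm, smul_smul, ← pow_add, two_mul,
      ← mul_assoc]
  have hbc := bq_pow_mul_cq_pow_mul q j j 1 1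
  rw [pow_one, pow_one] at hbc
  rw [← mul_assoc, habc, smul_mul_assoc, mul_assoc, aq_mul_dq, mul_add, mul_one, mul_smul_comm,
    hbc, smul_add, smul_smul, ← pow_succ]

theorem aq_pow_mul_dq_pow (k : ℕ) :
    aq q ^ k * dq q ^ k = ∑ j ∈ range (k + 1), adCoeff q k j • (bq q ^ j * cq q ^ j) := by
  induction k with
  | zero => simp
  | succ k ih =>
    rw [pow_succ', pow_succ, mul_assoc, ← mul_assoc (aq q ^ k), ih, sum_mul, mul_sum,
      adCoeff.sum_succ_smul, ← sum_add_distrib]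
    refine sum_congr rfl fun j _ => ?_
    rw [smul_mul_assoc, mul_smul_comm, aq_mul_bq_pow_mul_cq_pow_mul_dq, smul_add, smul_smul,
      smul_smul]

theorem aq_pow_mul_bq_pow_mul_cq_pow_mul_dq_pow (k r s : ℕ) :
    aq q ^ k * bq q ^ r * cq q ^ s * dq q ^ k =
      q ^ (k * (r + s)) •
        ∑ j ∈ range (k + 1), adCoeff q k j • (bq q ^ (r + j) * cq q ^ (s + j)) := by
  rw [mul_assoc, mul_assoc, ← mul_assoc (bq q ^ r), bq_pow_mul_cq_pow_mul_dq_pow, mul_smul_comm,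
    ← mul_assoc, aq_pow_mul_dq_pow, sum_mul]
  refine congrArg _ (sum_congr rfl fun j _ => ?_)
  rw [smul_mul_assoc, bq_pow_mul_cq_pow_mul, add_comm j, add_comm j]

end ASLq

/-- For `q` a primitive `l`-th root of unity, `l` odd, and `0 ≤ k ≤ l`:
`b^r c^s d^(l-k) = q^((l-k)(r+s)) δ a^k b^r c^s - Σ_{j=1}^k p_{k,j}(q) b^(r+j) c^(s+j) d^(l-k)`,
where `δ = d^l` is central. -/
theorem stmt11 (q : ℂ) (l : ℕ) (hq : IsPrimitiveRoot q l) (hl : Odd l)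
    (k r s : ℕ) (hk : k ≤ l) :
    bq q ^ r * cq q ^ s * dq q ^ (l - k) =
      q ^ ((l - k) * (r + s)) • (dq q ^ l * (aq q ^ k * bq q ^ r * cq q ^ s)) -
        ∑ j ∈ Finset.Icc 1 k,
          pcoef q k j • (bq q ^ (r + j) * cq q ^ (s + j) * dq q ^ (l - k)) := by
  have hql := hq.pow_eq_one
  have hδ : dq q ^ l * (aq q ^ k * bq q ^ r * cq q ^ s) =
      aq q ^ k * bq q ^ r * cq q ^ s * dq q ^ k * dq q ^ (l - k) := by
    rw [((((ASLq.commute_dq_pow_aq q hql).pow_right k).mul_right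
        ((ASLq.commute_dq_pow_bq q hql).pow_right r)).mul_right
        ((ASLq.commute_dq_pow_cq q hql).pow_right s)).eq, mul_assoc _ (dq q ^ k), ← pow_add,
      Nat.add_sub_cancel' hk]
  have hsum :
      ∑ j ∈ Icc 1 k, adCoeff q k j • (bq q ^ (r + j) * cq q ^ (s + j)) * dq q ^ (l - k) =
      ∑ j ∈ Icc 1 k, pcoef q k j • (bq q ^ (r + j) * cq q ^ (s + j) * dq q ^ (l - k)) := by
    refine sum_congr rfl fun j hj => ?_
    have hj := mem_Icc.mp hj
    rw [smul_mul_assoc, adCoeff.eq_pcoef q hj.2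
      (hq.prod_Icc_pow_two_mul_sub_one_ne_zero hl (by omega))]
  rw [hδ, ASLq.aq_pow_mul_bq_pow_mul_cq_pow_mul_dq_pow, smul_mul_assoc, smul_smul, ← pow_add,
    ← add_mul, Nat.sub_add_cancel hk, pow_mul, hql, one_pow, one_smul, sum_mul,
    sum_range_eq_add_Ico _ k.add_one_pos, Ico_add_one_right_eq_Icc, adCoeff.zero_right,
    one_smul, add_zero, add_zero, hsum, add_sub_cancel_right]
end
end
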